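/- Fix a critical value c and p ∈ (0, 1). If the observed value x satisfies c < x < c + Φ⁻¹(0.5·p + 0.5), then any θ ∈ ℝ with F(x; θ, c) = p satisfies θ < c. (In particular, the upper bound θ(p) of the conditional quantile falls below the critical value whenever the observed t-statistic exceeds c by less than Φ⁻¹(0.5p + 0.5).) -/

import Mathlib

open Filter Set

/-- The standard normal CDF `Φ(t) = (2π)^{−1/2} ∫_{−∞}^t exp(−s²/2) ds`. -/
noncomputable def Phi (t : ℝ) : ℝ :=
  (Real.sqrt (2 * Real.pi))⁻¹ * ∫ s in Set.Iic t, Real.exp (-(s ^ 2) / 2)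

/-- The truncated-normal distribution function
    `F(a; θ, c) := (Φ(a − θ) − Φ(c − θ)) / (1 − Φ(c − θ))`. -/
noncomputable def F (a θ c : ℝ) : ℝ :=
  (Phi (a - θ) - Phi (c - θ)) / (1 - Phi (c - θ))

/-- The inverse of the standard normal CDF on `(0,1)`. -/
noncomputable def PhiInv : ℝ → ℝ := Function.invFun Phi

/-! If `θ ≥ c`, put `u = c - θ ≤ 0` and `a = x - c > 0`; then `F(x; θ, c)` is the conditional
probability `P(X ≤ u + a | X > u)` for a standard normal `X`. The function
`h(u) = (2Φ(a) - 1)(1 - Φ(u)) - (Φ(u + a) - Φ(u))` vanishes at `u = 0` and has derivative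
`2(1 - Φ(a))φ(u) - φ(u + a) ≤ 0` for `u ≤ 0`, because `φ(u + a) ≥ e^{-a²/2} φ(u)` there and the
Gaussian tail obeys `1 - Φ(a) ≤ e^{-a²/2} / 2` (shift the tail integral by `a`). Hence
`F(x; θ, c) ≤ 2Φ(x - c) - 1`, which is `< p` exactly when `x < c + Φ⁻¹(p/2 + 1/2)`. -/

open MeasureTheory ProbabilityTheory Real

theorem integral_Ioi_comp_add_right {E : Type*} [NormedAddCommGroup E] [NormedSpace ℝ E]
    (b a : ℝ) (f : ℝ → E) : ∫ x in Ioi b, f (x + a) = ∫ x in Ioi (b + a), f x := by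
  have h := (Homeomorph.addRight a).isClosedEmbedding.measurableEmbedding.setIntegral_map
    (μ := volume) f (Ioi (b + a))
  rw [Homeomorph.coe_addRight, map_add_right_eq_self volume a] at h
  rw [h, preimage_add_const_Ioi, add_sub_cancel_right]

theorem gaussianPDFReal_zero_one (x : ℝ) :
    gaussianPDFReal 0 1 x = (√(2 * π))⁻¹ * exp (-x ^ 2 / 2) := by
  simp [gaussianPDFReal]

theorem gaussianPDFReal_zero_one_add (x a : ℝ) :
    gaussianPDFReal 0 1 (x + a) = gaussianPDFReal 0 1 x * exp (-(x * a) - a ^ 2 / 2) := by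
  rw [gaussianPDFReal_zero_one, gaussianPDFReal_zero_one, mul_assoc, ← exp_add]
  ring_nf

theorem gaussianPDFReal_zero_one_neg (x : ℝ) :
    gaussianPDFReal 0 1 (-x) = gaussianPDFReal 0 1 x := by
  simp only [gaussianPDFReal_zero_one, neg_sq]

theorem continuous_gaussianPDFReal_zero_one : Continuous (gaussianPDFReal 0 1) := by
  simp only [funext gaussianPDFReal_zero_one]
  fun_prop

theorem Phi_eq_setIntegral (t : ℝ) : Phi t = ∫ s in Iic t, gaussianPDFReal 0 1 s := by
  simp only [Phi, gaussianPDFReal_zero_one, integral_const_mul, neg_div]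

theorem Phi_eq_cdf : Phi = cdf (gaussianReal 0 1) := by
  ext t
  rw [cdf_eq_real, measureReal_def, gaussianReal_apply_eq_integral _ one_ne_zero,
    ENNReal.toReal_ofReal (setIntegral_nonneg measurableSet_Iic
      fun x _ ↦ gaussianPDFReal_nonneg 0 1 x), Phi_eq_setIntegral]

theorem one_sub_Phi (t : ℝ) : 1 - Phi t = ∫ s in Ioi t, gaussianPDFReal 0 1 s := by
  have hint := integrable_gaussianPDFReal 0 1
  rw [← integral_gaussianPDFReal_eq_one 0 one_ne_zero,
    ← intervalIntegral.integral_Iic_add_Ioi hint.integrableOn hint.integrableOn,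
    Phi_eq_setIntegral, add_sub_cancel_left]

theorem Phi_sub_Phi (s t : ℝ) : Phi t - Phi s = ∫ x in s..t, gaussianPDFReal 0 1 x := by
  have hint := integrable_gaussianPDFReal 0 1
  rw [Phi_eq_setIntegral, Phi_eq_setIntegral,
    intervalIntegral.integral_Iic_sub_Iic hint.integrableOn hint.integrableOn]

theorem Phi_strictMono : StrictMono Phi := fun s t hst ↦ by
  have := intervalIntegral.intervalIntegral_pos_of_pos_on
    (continuous_gaussianPDFReal_zero_one.intervalIntegrable s t)
    (fun x _ ↦ gaussianPDFReal_pos 0 1 x one_ne_zero) hst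
  linarith [Phi_sub_Phi s t]

theorem Phi_lt_one (t : ℝ) : Phi t < 1 :=
  (Phi_strictMono (lt_add_one t)).trans_le (Phi_eq_cdf ▸ cdf_le_one _ _)

theorem Phi_neg (t : ℝ) : Phi (-t) = 1 - Phi t := by
  rw [one_sub_Phi, Phi_eq_setIntegral, ← neg_neg t, ← integral_comp_neg_Iic, neg_neg]
  simp only [gaussianPDFReal_zero_one_neg]

theorem Phi_zero : Phi 0 = 1 / 2 := by
  have h := Phi_neg 0
  rw [neg_zero] at h
  linarith

theorem hasDerivAt_Phi (t : ℝ) : HasDerivAt Phi (gaussianPDFReal 0 1 t) t := by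
  have hΦ : Phi = fun u ↦ Phi 0 + ∫ x in (0 : ℝ)..u, gaussianPDFReal 0 1 x := by
    ext u; rw [← Phi_sub_Phi]; ring
  have hc := continuous_gaussianPDFReal_zero_one
  rw [hΦ]
  exact (intervalIntegral.integral_hasDerivAt_right (hc.intervalIntegrable _ _)
    hc.aestronglyMeasurable.stronglyMeasurableAtFilter hc.continuousAt).const_add _

theorem continuous_Phi : Continuous Phi :=
  continuous_iff_continuousAt.2 fun t ↦ (hasDerivAt_Phi t).continuousAt

theorem Phi_PhiInv {y : ℝ} (hy : y ∈ Ioo 0 1) : Phi (PhiInv y) = y := by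
  have hbot := (tendsto_order.1 (Phi_eq_cdf ▸ tendsto_cdf_atBot (gaussianReal 0 1))).2 y hy.1
  have htop := (tendsto_order.1 (Phi_eq_cdf ▸ tendsto_cdf_atTop (gaussianReal 0 1))).1 y hy.2
  exact Function.invFun_eq <| mem_range_of_exists_le_of_exists_ge continuous_Phi
    (hbot.exists.imp fun _ ↦ le_of_lt) (htop.exists.imp fun _ ↦ le_of_lt)

theorem one_sub_Phi_le {a : ℝ} (ha : 0 ≤ a) : 1 - Phi a ≤ exp (-a ^ 2 / 2) / 2 := by
  have hshift := integral_Ioi_comp_add_right 0 a (gaussianPDFReal 0 1)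
  rw [zero_add] at hshift
  calc 1 - Phi a = ∫ x in Ioi 0, gaussianPDFReal 0 1 (x + a) := by rw [one_sub_Phi, hshift]
    _ ≤ ∫ x in Ioi 0, exp (-a ^ 2 / 2) * gaussianPDFReal 0 1 x := by
      refine setIntegral_mono_on ((integrable_gaussianPDFReal 0 1).comp_add_right a).integrableOn
        ((integrable_gaussianPDFReal 0 1).const_mul _).integrableOn measurableSet_Ioi
        fun x hx ↦ ?_
      rw [gaussianPDFReal_zero_one_add, mul_comm (exp _)]
      gcongr
      · exact gaussianPDFReal_nonneg 0 1 x
      · nlinarith [mem_Ioi.1 hx]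
    _ = exp (-a ^ 2 / 2) / 2 := by
      rw [integral_const_mul, ← one_sub_Phi, Phi_zero]
      ring

theorem two_mul_one_sub_Phi_mul_le {a v : ℝ} (ha : 0 ≤ a) (hv : v ≤ 0) :
    2 * (1 - Phi a) * gaussianPDFReal 0 1 v ≤ gaussianPDFReal 0 1 (v + a) :=
  calc 2 * (1 - Phi a) * gaussianPDFReal 0 1 v
      ≤ exp (-a ^ 2 / 2) * gaussianPDFReal 0 1 v := by
        gcongr
        · exact gaussianPDFReal_nonneg 0 1 v
        · linarith [one_sub_Phi_le ha]
    _ ≤ gaussianPDFReal 0 1 v * exp (-(v * a) - a ^ 2 / 2) := by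
        rw [mul_comm]
        gcongr
        · exact gaussianPDFReal_nonneg 0 1 v
        · nlinarith
    _ = gaussianPDFReal 0 1 (v + a) := (gaussianPDFReal_zero_one_add v a).symm

theorem Phi_add_sub_Phi_le {a u : ℝ} (ha : 0 ≤ a) (hu : u ≤ 0) :
    Phi (u + a) - Phi u ≤ (2 * Phi a - 1) * (1 - Phi u) := by
  set h : ℝ → ℝ := fun v ↦ (2 * Phi a - 1) * (1 - Phi v) - (Phi (v + a) - Phi v)
  have hderiv (v : ℝ) : HasDerivAt h
      (2 * (1 - Phi a) * gaussianPDFReal 0 1 v - gaussianPDFReal 0 1 (v + a)) v := by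
    have hshift := (hasDerivAt_Phi (v + a)).comp_add_const v a
    exact ((((hasDerivAt_Phi v).const_sub 1).const_mul (2 * Phi a - 1)).sub
      (hshift.sub (hasDerivAt_Phi v))).congr_deriv (by ring)
  have hanti : AntitoneOn h (Iic 0) :=
    antitoneOn_of_hasDerivWithinAt_nonpos (convex_Iic 0)
      (continuous_iff_continuousAt.2 fun v ↦ (hderiv v).continuousAt).continuousOn
      (fun v _ ↦ (hderiv v).hasDerivWithinAt)
      fun v hv ↦ sub_nonpos.2 <| two_mul_one_sub_Phi_mul_le ha (interior_subset hv : v ∈ Iic 0)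
  have h0 : h 0 = 0 := by
    simp only [h, zero_add, Phi_zero]
    ring
  have := hanti hu self_mem_Iic hu
  simp only [h0, h] at this
  linarith

theorem F_le_two_mul_Phi_sub_one {x θ c : ℝ} (hθ : c ≤ θ) (hx : c ≤ x) :
    F x θ c ≤ 2 * Phi (x - c) - 1 := by
  have key := Phi_add_sub_Phi_le (sub_nonneg.2 hx) (sub_nonpos.2 hθ)
  rw [show c - θ + (x - c) = x - θ by ring] at key
  exact (div_le_iff₀ (sub_pos.2 (Phi_lt_one _))).2 key

/-- Fix `c` and `p ∈ (0,1)`. If `c < x < c + Φ⁻¹(0.5·p + 0.5)`, then any `θ` with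
`F(x; θ, c) = p` satisfies `θ < c`. -/
theorem stmt_9 (c p x θ : ℝ) (hp : p ∈ Set.Ioo (0 : ℝ) 1)
    (hx₁ : c < x) (hx₂ : x < c + PhiInv (0.5 * p + 0.5))
    (hθ : F x θ c = p) : θ < c := by
  obtain ⟨hp0, hp1⟩ := hp
  by_contra! hcθ
  have hΦ : Phi (x - c) < 0.5 * p + 0.5 :=
    Phi_PhiInv (y := 0.5 * p + 0.5) ⟨by linarith, by linarith⟩ ▸ Phi_strictMono (by linarith)
  linarith [F_le_two_mul_Phi_sub_one hcθ hx₁.le]
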